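/- arXiv:1901.07053 — 2 statements merged into one kernel-verified Lean document; each statement's English description precedes it below -/
import Mathlib

section
/- For any symmetric positive definite matrices A, B of size n, any vector q in R^n, and any μ ∈ [0,1], one has ⟨q, (μA + (1-μ)B)⁻¹ q⟩ ≤ μ⟨q, A⁻¹ q⟩ + (1-μ)⟨q, B⁻¹ q⟩. -/
open Matrix

noncomputable def lamMax {n : ℕ} (X : Matrix (Fin n) (Fin n) ℝ) : ℝ :=
  sSup (spectrum ℝ X)

noncomputable def lamMin {n : ℕ} (X : Matrix (Fin n) (Fin n) ℝ) : ℝ :=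
  sInf (spectrum ℝ X)

noncomputable def Dp {n : ℕ} (p : ℝ) (X : Matrix (Fin n) (Fin n) ℝ) : ℝ :=
  X.trace + (p - 2) * lamMax X

/-!
Completing the square gives, for positive definite `A`, the variational formula
`⟨q, A⁻¹ q⟩ = max_x (2 ⟨q, x⟩ - ⟨x, A x⟩)`, the maximum being attained at `x = A⁻¹ q`.
The objective is affine in `A`, so `A ↦ ⟨q, A⁻¹ q⟩` is a supremum of affine functions, hence
convex: evaluate at the maximiser `x = M⁻¹ q` for `M = μ A + (1 - μ) B` and bound each of the
two resulting terms by the variational formula for `A` and for `B`.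
-/

namespace Matrix

lemma PosDef.smul_add_one_sub_smul {n : Type*} {A B : Matrix n n ℝ} (hA : A.PosDef)
    (hB : B.PosDef) {μ : ℝ} (hμ0 : 0 ≤ μ) (hμ1 : μ ≤ 1) : (μ • A + (1 - μ) • B).PosDef := by
  rcases hμ1.lt_or_eq with hμ1 | rfl
  · exact PosDef.posSemidef_add (hA.posSemidef.smul hμ0) (hB.smul (sub_pos.2 hμ1))
  · simpa using hA

variable {n R : Type*} [Fintype n]

lemma IsSymm.dotProduct_mulVec_comm [CommSemiring R] {A : Matrix n n R} (hA : A.IsSymm)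
    (u v : n → R) : u ⬝ᵥ A *ᵥ v = v ⬝ᵥ A *ᵥ u := by
  rw [dotProduct_mulVec, ← mulVec_transpose, hA.eq, dotProduct_comm]

lemma dotProduct_smul_add_smul_mulVec [CommSemiring R] (a b : R) (A B : Matrix n n R)
    (x : n → R) : x ⬝ᵥ (a • A + b • B) *ᵥ x = a * (x ⬝ᵥ A *ᵥ x) + b * (x ⬝ᵥ B *ᵥ x) := by
  simp only [add_mulVec, smul_mulVec, dotProduct_add, dotProduct_smul, smul_eq_mul]

lemma dotProduct_nonsing_inv_mulVec_eq [DecidableEq n] [CommRing R] {M : Matrix n n R}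
    (hM : IsUnit M.det) (q : n → R) :
    q ⬝ᵥ M⁻¹ *ᵥ q = 2 * (q ⬝ᵥ M⁻¹ *ᵥ q) - M⁻¹ *ᵥ q ⬝ᵥ M *ᵥ M⁻¹ *ᵥ q := by
  rw [mulVec_mulVec, mul_nonsing_inv M hM, one_mulVec, dotProduct_comm (M⁻¹ *ᵥ q)]
  ring

lemma PosDef.two_mul_dotProduct_sub_le [DecidableEq n] {A : Matrix n n ℝ} (hA : A.PosDef)
    (q x : n → ℝ) : 2 * (q ⬝ᵥ x) - x ⬝ᵥ A *ᵥ x ≤ q ⬝ᵥ A⁻¹ *ᵥ q := by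
  set w := A⁻¹ *ᵥ q
  have hAw : A *ᵥ w = q := by
    rw [mulVec_mulVec, mul_nonsing_inv A ((isUnit_iff_isUnit_det A).mp hA.isUnit), one_mulVec]
  have hsq : 0 ≤ (x - w) ⬝ᵥ A *ᵥ (x - w) := by
    simpa using hA.posSemidef.dotProduct_mulVec_nonneg (x - w)
  have hcross : w ⬝ᵥ A *ᵥ x = q ⬝ᵥ x := by
    rw [(isHermitian_iff_isSymm.mp hA.isHermitian).dotProduct_mulVec_comm, hAw, dotProduct_comm]
  have hexpand : (x - w) ⬝ᵥ A *ᵥ (x - w) = x ⬝ᵥ A *ᵥ x - 2 * (q ⬝ᵥ x) + q ⬝ᵥ w := by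
    rw [mulVec_sub, dotProduct_sub, sub_dotProduct, sub_dotProduct, hAw, hcross,
      dotProduct_comm x q, dotProduct_comm w q]
    ring
  linarith

end Matrix

theorem stmt0 {n : ℕ} (q : Fin n → ℝ) (A B : Matrix (Fin n) (Fin n) ℝ)
    (hA : A.PosDef) (hB : B.PosDef) (μ : ℝ) (hμ0 : 0 ≤ μ) (hμ1 : μ ≤ 1) :
    q ⬝ᵥ ((μ • A + (1 - μ) • B)⁻¹).mulVec q ≤
      μ * (q ⬝ᵥ (A⁻¹).mulVec q) + (1 - μ) * (q ⬝ᵥ (B⁻¹).mulVec q) := by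
  set M := μ • A + (1 - μ) • B
  have hM : IsUnit M.det :=
    (isUnit_iff_isUnit_det M).mp (hA.smul_add_one_sub_smul hB hμ0 hμ1).isUnit
  set x := M⁻¹ *ᵥ q
  have hAx := mul_le_mul_of_nonneg_left (hA.two_mul_dotProduct_sub_le q x) hμ0
  have hBx := mul_le_mul_of_nonneg_left (hB.two_mul_dotProduct_sub_le q x) (sub_nonneg.2 hμ1)
  calc q ⬝ᵥ M⁻¹ *ᵥ q = 2 * (q ⬝ᵥ x) - x ⬝ᵥ M *ᵥ x := dotProduct_nonsing_inv_mulVec_eq hM q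
    _ = μ * (2 * (q ⬝ᵥ x) - x ⬝ᵥ A *ᵥ x) + (1 - μ) * (2 * (q ⬝ᵥ x) - x ⬝ᵥ B *ᵥ x) := by
      rw [dotProduct_smul_add_smul_mulVec]; ring
    _ ≤ _ := add_le_add hAx hBx
end

section
/- Let p ≥ 2, D_p(X) = tr(X) + (p-2)λ_max(X). Let X₁, ..., X_k be symmetric positive definite n×n matrices and ν₁, ..., ν_k ∈ [0,1] with Σνᵢ = 1. Then 1 / D_p((Σᵢ νᵢ Xᵢ)⁻¹) ≥ Σᵢ νᵢ / D_p(Xᵢ⁻¹). -/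
open Matrix

/-!
The map `f X = D_p(X⁻¹)` is convex on positive definite matrices: `v ⬝ᵥ X⁻¹ *ᵥ v` is a supremum of
functions affine in `X`, hence convex, and both `tr (X⁻¹)` and `λ_max (X⁻¹)` are built from these
quadratic forms (a sum over the standard basis, resp. the least `c` dominating all Rayleigh
quotients), with `p - 2 ≥ 0`. Moreover `f (c • X) = c⁻¹ * f X`. For such a function, rescaling each
`Xᵢ` to `(f Xᵢ * T) • Xᵢ` with `T = ∑ νᵢ / f Xᵢ` makes all values of `f` equal to `T⁻¹`, and Jensen's
inequality for the rescaled convex combination gives `f (∑ νᵢ • Xᵢ) ≤ T⁻¹`.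
-/

theorem ConvexOn.sum_div_le_one_div_map_sum {E ι : Type*} [AddCommGroup E] [Module ℝ E]
    {s : Set E} {f : E → ℝ} (hf : ConvexOn ℝ s f) (hs : ∀ c : ℝ, 0 < c → ∀ x ∈ s, c • x ∈ s)
    (hpos : ∀ x ∈ s, 0 < f x) (hhom : ∀ c : ℝ, 0 < c → ∀ x ∈ s, f (c • x) = c⁻¹ * f x)
    {t : Finset ι} {ν : ι → ℝ} {x : ι → E} (hν0 : ∀ i ∈ t, 0 ≤ ν i) (hν1 : ∑ i ∈ t, ν i = 1)
    (hx : ∀ i ∈ t, x i ∈ s) :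
    ∑ i ∈ t, ν i / f (x i) ≤ 1 / f (∑ i ∈ t, ν i • x i) := by
  have hS := hpos _ (hf.1.sum_mem hν0 hν1 hx)
  set T := ∑ i ∈ t, ν i / f (x i)
  rcases le_or_gt T 0 with hT | hT
  · exact hT.trans (one_div_pos.2 hS).le
  -- Rescaled by `f (x i) * T`, every `x i` has `f`-value `T⁻¹`.
  have hc : ∀ i ∈ t, 0 < f (x i) * T := fun i hi => mul_pos (hpos _ (hx i hi)) hT
  have hμ1 : ∑ i ∈ t, ν i / (f (x i) * T) = 1 := by
    rw [Finset.sum_congr rfl fun i _ => (div_div _ _ _).symm, ← Finset.sum_div, div_self hT.ne']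
  have hμx : ∀ i ∈ t, (ν i / (f (x i) * T)) • (f (x i) * T) • x i = ν i • x i := fun i hi => by
    rw [smul_smul, div_mul_cancel₀ _ (hc i hi).ne']
  have hfy : ∀ i ∈ t, f ((f (x i) * T) • x i) = T⁻¹ := fun i hi => by
    have := (hpos _ (hx i hi)).ne'
    rw [hhom _ (hc i hi) _ (hx i hi)]
    field_simp
  rw [le_one_div hT hS, one_div]
  calc f (∑ i ∈ t, ν i • x i)
      = f (∑ i ∈ t, (ν i / (f (x i) * T)) • (f (x i) * T) • x i) := by
        rw [Finset.sum_congr rfl hμx]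
    _ ≤ ∑ i ∈ t, (ν i / (f (x i) * T)) • f ((f (x i) * T) • x i) :=
        hf.map_sum_le (fun i hi => div_nonneg (hν0 i hi) (hc i hi).le) hμ1
          (fun i hi => hs _ (hc i hi) _ (hx i hi))
    _ = T⁻¹ := by
        rw [Finset.sum_congr rfl fun i hi => by rw [hfy i hi], ← Finset.sum_smul, hμ1, one_smul]

namespace Matrix

theorem convex_setOf_posDef {m : Type*} : Convex ℝ {M : Matrix m m ℝ | M.PosDef} :=
  convex_iff_forall_pos.2 fun _ hX _ hY _ _ ha hb _ => (hX.smul ha).add (hY.smul hb)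

variable {m : Type*} [Fintype m] [DecidableEq m]

theorem PosDef.mulVec_inv_mulVec {M : Matrix m m ℝ} (hM : M.PosDef) (v : m → ℝ) :
    M *ᵥ (M⁻¹ *ᵥ v) = v := by
  rw [mulVec_mulVec, mul_nonsing_inv _ ((isUnit_iff_isUnit_det M).1 hM.isUnit), one_mulVec]

/-- Equality holds at `w = M⁻¹ *ᵥ v`, so `v ⬝ᵥ M⁻¹ *ᵥ v` is a supremum of functions affine in `M`. -/
theorem PosDef.two_mul_dotProduct_sub_le_s4 {M : Matrix m m ℝ} (hM : M.PosDef) (v w : m → ℝ) :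
    2 * (v ⬝ᵥ w) - w ⬝ᵥ M *ᵥ w ≤ v ⬝ᵥ M⁻¹ *ᵥ v := by
  set a := M⁻¹ *ᵥ v
  have hMa : M *ᵥ a = v := hM.mulVec_inv_mulVec v
  have hMt : Mᵀ = M := by simpa [conjTranspose_eq_transpose_of_trivial] using hM.1.eq
  have hsq : 0 ≤ (a - w) ⬝ᵥ M *ᵥ (a - w) := by
    simpa using hM.posSemidef.dotProduct_mulVec_nonneg (a - w)
  have hsymm : a ⬝ᵥ M *ᵥ w = v ⬝ᵥ w := by
    rw [dotProduct_mulVec, ← mulVec_transpose, hMt, hMa]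
  rw [mulVec_sub, dotProduct_sub, sub_dotProduct, sub_dotProduct, hMa, hsymm,
    dotProduct_comm w v, dotProduct_comm a v] at hsq
  linarith

theorem convexOn_dotProduct_inv_mulVec (v : m → ℝ) :
    ConvexOn ℝ {M : Matrix m m ℝ | M.PosDef} fun M => v ⬝ᵥ M⁻¹ *ᵥ v := by
  refine ⟨convex_setOf_posDef, fun X hX Y hY a b ha hb hab => ?_⟩
  set S := a • X + b • Y
  have hS : S.PosDef := convex_setOf_posDef hX hY ha hb hab
  set w := S⁻¹ *ᵥ v
  have hSw : w ⬝ᵥ S *ᵥ w = a * (w ⬝ᵥ X *ᵥ w) + b * (w ⬝ᵥ Y *ᵥ w) := by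
    simp only [S, add_mulVec, smul_mulVec, dotProduct_add, dotProduct_smul, smul_eq_mul]
  have hwv : w ⬝ᵥ S *ᵥ w = v ⬝ᵥ w := by rw [hS.mulVec_inv_mulVec, dotProduct_comm]
  calc v ⬝ᵥ S⁻¹ *ᵥ v
      = a * (2 * (v ⬝ᵥ w) - w ⬝ᵥ X *ᵥ w) + b * (2 * (v ⬝ᵥ w) - w ⬝ᵥ Y *ᵥ w) := by
        linear_combination (-2 * (v ⬝ᵥ w)) * hab - hSw + hwv
    _ ≤ a * (v ⬝ᵥ X⁻¹ *ᵥ v) + b * (v ⬝ᵥ Y⁻¹ *ᵥ v) := by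
        gcongr
        · exact hX.two_mul_dotProduct_sub_le_s4 v w
        · exact hY.two_mul_dotProduct_sub_le_s4 v w

theorem trace_eq_sum_single_dotProduct_mulVec_single (M : Matrix m m ℝ) :
    M.trace = ∑ j, Pi.single j 1 ⬝ᵥ M *ᵥ Pi.single j 1 := by
  simp [trace]

theorem convexOn_trace_inv : ConvexOn ℝ {M : Matrix m m ℝ | M.PosDef} fun M => M⁻¹.trace := by
  refine ⟨convex_setOf_posDef, fun X hX Y hY a b ha hb hab => ?_⟩
  simp only [trace_eq_sum_single_dotProduct_mulVec_single, smul_eq_mul, Finset.mul_sum,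
    ← Finset.sum_add_distrib]
  exact Finset.sum_le_sum fun j _ => (convexOn_dotProduct_inv_mulVec _).2 hX hY ha hb hab

end Matrix

section lamMax

variable {n : ℕ}

theorem lamMax_nonneg {A : Matrix (Fin n) (Fin n) ℝ} (hA : A.PosSemidef) : 0 ≤ lamMax A :=
  Real.sSup_nonneg fun _ hx => (posSemidef_iff_isHermitian_and_spectrum_nonneg.1 hA).2 hx

theorem lamMax_smul (A : Matrix (Fin n) (Fin n) ℝ) {c : ℝ} (hc : 0 < c) :
    lamMax (c • A) = c * lamMax A := by
  have := spectrum.unit_smul_eq_smul (R := ℝ) A (Units.mk0 c hc.ne')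
  rw [lamMax, lamMax, ← smul_eq_mul, ← Real.sSup_smul_of_nonneg hc.le]
  simpa [Units.smul_def] using congrArg sSup this

theorem lamMax_le_iff [NeZero n] {A : Matrix (Fin n) (Fin n) ℝ} (hA : A.IsHermitian) {c : ℝ} :
    lamMax A ≤ c ↔ ∀ v, v ⬝ᵥ A *ᵥ v ≤ c * (v ⬝ᵥ v) := by
  have hne : (spectrum ℝ A).Nonempty := ⟨_, hA.eigenvalues_mem_spectrum_real 0⟩
  have hA' : (algebraMap ℝ _ c - A).IsHermitian := by
    rw [Algebra.algebraMap_eq_smul_one]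
    exact (isHermitian_one.smul (IsSelfAdjoint.all c)).sub hA
  calc lamMax A ≤ c ↔ ∀ x ∈ spectrum ℝ A, x ≤ c := csSup_le_iff finite_real_spectrum.bddAbove hne
    _ ↔ spectrum ℝ (algebraMap ℝ _ c - A) ⊆ {x | 0 ≤ x} := by
        rw [← spectrum.singleton_sub_eq]
        simp [Set.subset_def]
    _ ↔ (algebraMap ℝ _ c - A).PosSemidef := by
        rw [posSemidef_iff_isHermitian_and_spectrum_nonneg, and_iff_right hA']
    _ ↔ ∀ v, v ⬝ᵥ A *ᵥ v ≤ c * (v ⬝ᵥ v) := by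
        rw [posSemidef_iff_dotProduct_mulVec, and_iff_right hA']
        simp [sub_mulVec, Algebra.algebraMap_eq_smul_one, smul_mulVec]

theorem convexOn_lamMax_inv [NeZero n] :
    ConvexOn ℝ {M : Matrix (Fin n) (Fin n) ℝ | M.PosDef} fun M => lamMax M⁻¹ := by
  refine ⟨convex_setOf_posDef, fun X (hX : X.PosDef) Y (hY : Y.PosDef) a b ha hb hab => ?_⟩
  have hS : (a • X + b • Y).PosDef := convex_setOf_posDef hX hY ha hb hab
  refine (lamMax_le_iff hS.inv.1).2 fun v => ?_
  have hXv := (lamMax_le_iff hX.inv.1).1 le_rfl v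
  have hYv := (lamMax_le_iff hY.inv.1).1 le_rfl v
  calc v ⬝ᵥ (a • X + b • Y)⁻¹ *ᵥ v ≤ a * (v ⬝ᵥ X⁻¹ *ᵥ v) + b * (v ⬝ᵥ Y⁻¹ *ᵥ v) :=
        (convexOn_dotProduct_inv_mulVec v).2 hX hY ha hb hab
    _ ≤ a * (lamMax X⁻¹ * (v ⬝ᵥ v)) + b * (lamMax Y⁻¹ * (v ⬝ᵥ v)) := by gcongr
    _ = (a • lamMax X⁻¹ + b • lamMax Y⁻¹) * (v ⬝ᵥ v) := by rw [smul_eq_mul, smul_eq_mul]; ring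

end lamMax

section Dp

variable {n : ℕ} {p : ℝ}

theorem Dp_fin_zero (X : Matrix (Fin 0) (Fin 0) ℝ) : Dp p X = 0 := by
  simp [Dp, lamMax]

theorem Dp_pos [NeZero n] (hp : 2 ≤ p) {A : Matrix (Fin n) (Fin n) ℝ} (hA : A.PosDef) :
    0 < Dp p A :=
  add_pos_of_pos_of_nonneg hA.trace_pos (mul_nonneg (by linarith) (lamMax_nonneg hA.posSemidef))

theorem Dp_smul (A : Matrix (Fin n) (Fin n) ℝ) {c : ℝ} (hc : 0 < c) :
    Dp p (c • A) = c * Dp p A := by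
  rw [Dp, Dp, trace_smul, lamMax_smul A hc, smul_eq_mul]
  ring

theorem Dp_inv_smul {A : Matrix (Fin n) (Fin n) ℝ} (hA : IsUnit A.det) {c : ℝ} (hc : 0 < c) :
    Dp p (c • A)⁻¹ = c⁻¹ * Dp p A⁻¹ := by
  have hinv : (c • A)⁻¹ = c⁻¹ • A⁻¹ :=
    inv_eq_left_inv (by
      simp [smul_smul, hc.ne', nonsing_inv_mul _ hA])
  rw [hinv]
  exact Dp_smul _ (inv_pos.2 hc)

theorem convexOn_Dp_inv [NeZero n] (hp : 2 ≤ p) :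
    ConvexOn ℝ {M : Matrix (Fin n) (Fin n) ℝ | M.PosDef} fun M => Dp p M⁻¹ :=
  convexOn_trace_inv.add (convexOn_lamMax_inv.smul (sub_nonneg.2 hp))

end Dp

theorem stmt4_general {n k : ℕ} (p : ℝ) (hp : 2 ≤ p)
    (X : Fin k → Matrix (Fin n) (Fin n) ℝ) (ν : Fin k → ℝ)
    (hX : ∀ i, (X i).PosDef) (hν0 : ∀ i, 0 ≤ ν i)
    (hsum : ∑ i, ν i = 1) :
    ∑ i, ν i / Dp p (X i)⁻¹ ≤ 1 / Dp p (∑ i, ν i • X i)⁻¹ := by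
  rcases Nat.eq_zero_or_pos n with rfl | hn
  · simp [Dp_fin_zero]
  have : NeZero n := ⟨hn.ne'⟩
  exact (convexOn_Dp_inv hp).sum_div_le_one_div_map_sum (fun c hc M hM => hM.smul hc)
    (fun M hM => Dp_pos hp hM.inv)
    (fun c hc M hM => Dp_inv_smul ((isUnit_iff_isUnit_det M).1 hM.isUnit) hc)
    (fun i _ => hν0 i) hsum (fun i _ => hX i)

theorem stmt4 {n k : ℕ} (p : ℝ) (hp : 2 ≤ p)
    (X : Fin k → Matrix (Fin n) (Fin n) ℝ) (ν : Fin k → ℝ)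
    (hX : ∀ i, (X i).PosDef) (hν0 : ∀ i, 0 ≤ ν i) (hν1 : ∀ i, ν i ≤ 1)
    (hsum : ∑ i, ν i = 1) :
    ∑ i, ν i / Dp p (X i)⁻¹ ≤ 1 / Dp p (∑ i, ν i • X i)⁻¹ :=
  stmt4_general p hp X ν hX hν0 hsum
end
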